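/- For n ≥ 2 and doubly pure elements a, b of the Cayley–Dickson algebra A_n: (3) ã·b = −(a·b)~ (this holds more generally when a is pure and b is doubly pure); and (4) ⟨a,b⟩ = 0 if and only if ã·b + b̃·a = 0. -/

import Mathlib

noncomputable section

/-- The Cayley–Dickson algebra `A n` of dimension `2^n` over `ℝ`:
`A 0 = ℝ` and `A (n+1) = A n × A n`. -/
def CD : ℕ → Type
  | 0 => ℝ
  | n + 1 => CD n × CD n

namespace CD

instance instAddCommGroup : (n : ℕ) → AddCommGroup (CD n)
  | 0 => inferInstanceAs (AddCommGroup ℝ)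
  | n + 1 =>
    letI := instAddCommGroup n
    inferInstanceAs (AddCommGroup (CD n × CD n))

instance instModule : (n : ℕ) → Module ℝ (CD n)
  | 0 => inferInstanceAs (Module ℝ ℝ)
  | n + 1 =>
    letI := instAddCommGroup n
    letI := instModule n
    inferInstanceAs (Module ℝ (CD n × CD n))

/-- Conjugation: `x̄ = x` on `ℝ` and `(x₁,x₂)‾ = (x̄₁, -x₂)`. -/
protected def conj : {n : ℕ} → CD n → CD n
  | 0, x => x
  | _ + 1, x => (CD.conj x.1, -x.2)

/-- Cayley–Dickson multiplication: `(a,b)(x,y) = (ax - ȳb, ya + bx̄)`. -/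
protected def mul : {n : ℕ} → CD n → CD n → CD n
  | 0, x, y => (show ℝ from x) * (show ℝ from y)
  | _ + 1, x, y =>
    (CD.mul x.1 y.1 - CD.mul (CD.conj y.2) x.2,
     CD.mul y.2 x.1 + CD.mul x.2 (CD.conj y.1))

instance instMul (n : ℕ) : Mul (CD n) := ⟨CD.mul⟩

/-- The multiplicative unit `e₀` of `A n`. -/
def e0 : (n : ℕ) → CD n
  | 0 => (1 : ℝ)
  | n + 1 => (e0 n, 0)

/-- The element `ẽ₀ = (0, e₀)` of `A n` (junk value `0` for `n = 0`). -/
def te0 : (n : ℕ) → CD n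
  | 0 => 0
  | n + 1 => (0, e0 n)

/-- The "complexification" `α̃ = (-b, a)` of `α = (a,b)` (junk value `0` for `n = 0`);
note `α̃ = α·ẽ₀`. -/
def tilde : {n : ℕ} → CD n → CD n
  | 0, _ => 0
  | _ + 1, x => (-x.2, x.1)

/-- The standard inner product on `A n ≅ ℝ^{2^n}`. -/
protected def inner : {n : ℕ} → CD n → CD n → ℝ
  | 0, x, y => (show ℝ from x) * (show ℝ from y)
  | _ + 1, x, y => CD.inner x.1 y.1 + CD.inner x.2 y.2

/-- The euclidean norm on `A n`. -/
protected def norm {n : ℕ} (x : CD n) : ℝ := Real.sqrt (CD.inner x x)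

/-- `x` is pure if its trace `t(x) = x + x̄` vanishes. -/
def IsPure {n : ℕ} (x : CD n) : Prop := x + CD.conj x = 0

/-- `x = (a,b)` is doubly pure if both `a` and `b` are pure
(equivalently, both `x` and `x̃` are pure). -/
def IsDoublyPure : {n : ℕ} → CD n → Prop
  | 0, x => x = 0
  | _ + 1, x => IsPure x.1 ∧ IsPure x.2

/-- The associator `(x,y,z) = (xy)z - x(yz)`. -/
def assoc {n : ℕ} (x y z : CD n) : CD n := (x * y) * z - x * (y * z)

/-- The subspace `ℍ_a`: the real span of `{e₀, ã, a, ẽ₀}`. -/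
def Ha {n : ℕ} (a : CD n) : Submodule ℝ (CD n) :=
  Submodule.span ℝ {e0 n, tilde a, a, te0 n}

/-- The orthogonal complement `ℍ_a^⊥` of `ℍ_a` in `A n`. -/
def HaPerp {n : ℕ} (a : CD n) : Set (CD n) :=
  {x | ∀ y ∈ Ha a, CD.inner x y = 0}

/-- The element `ε = (ẽ₀, 0)` of `A (n+1)`. -/
def eps (n : ℕ) : CD (n + 1) := (te0 n, 0)

/-- `α̂ = (b,a)` for `α = (a,b) ∈ A (n+1)`. -/
def hat {n : ℕ} (x : CD (n + 1)) : CD (n + 1) := (x.2, x.1)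

/-- The element `(a, b)` of `A (n+1) = A n × A n`. -/
def pair {n : ℕ} (a b : CD n) : CD (n + 1) := (a, b)

end CD

/-!
Write `a = (a₁, a₂)` and `b = (b₁, b₂)`. When the components are pure, conjugating them is
negation, so (3) is a direct componentwise computation with the Cayley–Dickson formula. For (4),
the first component of `ã·b + b̃·a` cancels and the second is `-(a₁b₁ + b₁a₁) - (a₂b₂ + b₂a₂)`,
which equals `2⟨a,b⟩e₀` by the polarization identity `x̄y + ȳx = 2⟨x,y⟩e₀` applied to pure `x, y`.
-/

namespace CD

variable {n : ℕ}

@[ext] lemma ext {x y : CD (n + 1)} (h₁ : x.1 = y.1) (h₂ : x.2 = y.2) : x = y :=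
  Prod.ext h₁ h₂

@[simp] lemma mul_fst (x y : CD (n + 1)) : (x * y).1 = x.1 * y.1 - CD.conj y.2 * x.2 := rfl
@[simp] lemma mul_snd (x y : CD (n + 1)) : (x * y).2 = y.2 * x.1 + x.2 * CD.conj y.1 := rfl
@[simp] lemma conj_fst (x : CD (n + 1)) : (CD.conj x).1 = CD.conj x.1 := rfl
@[simp] lemma conj_snd (x : CD (n + 1)) : (CD.conj x).2 = -x.2 := rfl
@[simp] lemma tilde_fst (x : CD (n + 1)) : (tilde x).1 = -x.2 := rfl
@[simp] lemma tilde_snd (x : CD (n + 1)) : (tilde x).2 = x.1 := rfl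
@[simp] lemma neg_fst (x : CD (n + 1)) : (-x).1 = -x.1 := rfl
@[simp] lemma neg_snd (x : CD (n + 1)) : (-x).2 = -x.2 := rfl
@[simp] lemma add_fst (x y : CD (n + 1)) : (x + y).1 = x.1 + y.1 := rfl
@[simp] lemma add_snd (x y : CD (n + 1)) : (x + y).2 = x.2 + y.2 := rfl
@[simp] lemma smul_fst (r : ℝ) (x : CD (n + 1)) : (r • x).1 = r • x.1 := rfl
@[simp] lemma smul_snd (r : ℝ) (x : CD (n + 1)) : (r • x).2 = r • x.2 := rfl
@[simp] lemma zero_snd : (0 : CD (n + 1)).2 = 0 := rfl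
@[simp] lemma e0_fst : (e0 (n + 1)).1 = e0 n := rfl
@[simp] lemma e0_snd : (e0 (n + 1)).2 = 0 := rfl
@[simp] lemma inner_succ (x y : CD (n + 1)) :
    CD.inner x y = CD.inner x.1 y.1 + CD.inner x.2 y.2 := rfl

lemma conj_neg : ∀ {n : ℕ} (x : CD n), CD.conj (-x) = -CD.conj x
  | 0, _ => rfl
  | _ + 1, x => by ext <;> simp [conj_neg x.1]

lemma neg_mul_and_mul_neg : ∀ {n : ℕ} (x y : CD n), -x * y = -(x * y) ∧ x * -y = -(x * y)
  | 0, x, y => ⟨neg_mul (show ℝ from x) y, mul_neg (show ℝ from x) y⟩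
  | n + 1, x, y => by
    have ih := neg_mul_and_mul_neg (n := n)
    constructor
    · ext
      · simp only [mul_fst, neg_fst, neg_snd, (ih _ _).1, (ih _ _).2, sub_neg_eq_add]
        abel
      · simp only [mul_snd, neg_fst, neg_snd, (ih _ _).1, (ih _ _).2, neg_add]
    · ext
      · simp only [mul_fst, neg_fst, neg_snd, conj_neg, (ih _ _).1, (ih _ _).2, sub_neg_eq_add]
        abel
      · simp only [mul_snd, neg_fst, neg_snd, conj_neg, (ih _ _).1, (ih _ _).2, neg_add]

protected lemma neg_mul (x y : CD n) : -x * y = -(x * y) := (neg_mul_and_mul_neg x y).1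

protected lemma mul_neg (x y : CD n) : x * -y = -(x * y) := (neg_mul_and_mul_neg x y).2

lemma conj_mul_add_conj_mul : ∀ {n : ℕ} (x y : CD n),
    CD.conj x * y + CD.conj y * x = (2 * CD.inner x y) • e0 n
  | 0, x, y => by
    change (show ℝ from x) * (show ℝ from y) + (show ℝ from y) * (show ℝ from x) =
      (2 * ((show ℝ from x) * (show ℝ from y))) • (1 : ℝ)
    rw [smul_eq_mul]
    ring
  | _ + 1, x, y => by
    ext
    · simp only [add_fst, mul_fst, conj_fst, conj_snd, CD.mul_neg,
        smul_fst, e0_fst, inner_succ, mul_add, add_smul, ← conj_mul_add_conj_mul x.1 y.1,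
        ← conj_mul_add_conj_mul x.2 y.2]
      abel
    · simp only [add_snd, mul_snd, conj_fst, conj_snd, CD.neg_mul, smul_snd, e0_snd, smul_zero]
      abel

lemma IsPure.conj_eq {x : CD n} (h : IsPure x) : CD.conj x = -x :=
  eq_neg_of_add_eq_zero_right h

lemma IsPure.two_inner_smul_e0 {x y : CD n} (hx : IsPure x) (hy : IsPure y) :
    (2 * CD.inner x y) • e0 n = -(x * y + y * x) := by
  rw [← conj_mul_add_conj_mul, hx.conj_eq, hy.conj_eq, CD.neg_mul, CD.neg_mul, neg_add]

lemma eq_zero_of_smul_e0_eq_zero : ∀ {n : ℕ} {r : ℝ}, r • e0 n = 0 → r = 0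
  | 0, r, h => by
    have h' : r * 1 = 0 := h
    simpa using h'
  | _ + 1, _, h => eq_zero_of_smul_e0_eq_zero (congrArg Prod.fst h)

lemma tilde_mul_of_isDoublyPure (a : CD (n + 1)) {b : CD (n + 1)} (hb : IsDoublyPure b) :
    tilde a * b = -tilde (a * b) := by
  ext <;> simp only [mul_fst, mul_snd, tilde_fst, tilde_snd, neg_fst, neg_snd,
    hb.1.conj_eq, hb.2.conj_eq, CD.neg_mul, CD.mul_neg] <;> abel

lemma tilde_mul_add_tilde_mul {a b : CD (n + 1)} (ha : IsDoublyPure a) (hb : IsDoublyPure b) :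
    tilde a * b + tilde b * a = ((0 : CD n), (2 * CD.inner a b) • e0 n) := by
  ext
  · simp only [add_fst, mul_fst, tilde_fst, tilde_snd, ha.2.conj_eq, hb.2.conj_eq, CD.neg_mul]
    abel
  · simp only [add_snd, mul_snd, tilde_fst, tilde_snd, hb.1.conj_eq, ha.1.conj_eq, CD.mul_neg]
    rw [inner_succ, mul_add, add_smul, ha.1.two_inner_smul_e0 hb.1, ha.2.two_inner_smul_e0 hb.2]
    abel

lemma inner_eq_zero_iff_tilde_mul_add_tilde_mul_eq_zero {a b : CD (n + 1)}
    (ha : IsDoublyPure a) (hb : IsDoublyPure b) :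
    CD.inner a b = 0 ↔ tilde a * b + tilde b * a = 0 := by
  rw [tilde_mul_add_tilde_mul ha hb]
  constructor
  · intro h
    ext
    · rfl
    · simp only [h, mul_zero, zero_smul, zero_snd]
  · intro h
    have h₂ : (2 * CD.inner a b) • e0 n = 0 := congrArg Prod.snd h
    linarith [eq_zero_of_smul_e0_eq_zero h₂]

end CD

/-- For `n ≥ 2`:
(3) `ã·b = -(a·b)~` whenever `a` is pure and `b` is doubly pure (in particular for
`a`, `b` both doubly pure);
(4) for doubly pure `a`, `b`: `⟨a,b⟩ = 0 ↔ ã·b + b̃·a = 0`. -/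
theorem statement1 (n : ℕ) (hn : 2 ≤ n) :
    (∀ a b : CD n, CD.IsPure a → CD.IsDoublyPure b →
      CD.tilde a * b = -CD.tilde (a * b)) ∧
    (∀ a b : CD n, CD.IsDoublyPure a → CD.IsDoublyPure b →
      (CD.inner a b = 0 ↔ CD.tilde a * b + CD.tilde b * a = 0)) := by
  obtain ⟨m, rfl⟩ : ∃ m, n = m + 1 := ⟨n - 1, by omega⟩
  exact ⟨fun a _ _ hb => CD.tilde_mul_of_isDoublyPure a hb,
    fun _ _ ha hb => CD.inner_eq_zero_iff_tilde_mul_add_tilde_mul_eq_zero ha hb⟩
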